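/- Let F be a free group freely generated by a set X, let r be a positive integer, and let a, b, c ∈ F be elements of word length exactly r with a⁻¹b = c⁻¹a. Then a = b = c. -/

import Mathlib

/-!
Write `d = a⁻¹ b`, so that `b = a d` and `c = a d⁻¹`. When two reduced words are multiplied,
a suffix `T` of the first cancels against the prefix `T⁻¹` of the second and nothing else
cancels. Hence `|a d| = |a|` forces `d = T⁻¹ M` with `|M| = |T|` and `T` a suffix of `a`;
likewise `|a d⁻¹| = |a|` forces `d = M'⁻¹ S` with `|M'| = |S|` and `S` a suffix of `a`.
Comparing lengths gives `S = T` and then `d = T⁻¹ T` as a reduced word, so `T` is empty and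
`d = 1`.
-/

namespace FreeGroup

variable {α : Type*} [DecidableEq α]

theorem IsReduced.exists_reduce_append_eq {L M : List (α × Bool)} (hL : IsReduced L)
    (hM : IsReduced M) :
    ∃ L₁ T M₁, L = L₁ ++ T ∧ M = invRev T ++ M₁ ∧ reduce (L ++ M) = L₁ ++ M₁ := by
  induction L using List.reverseRecOn generalizing M with
  | nil => exact ⟨[], [], M, rfl, rfl, hM.reduce_eq⟩
  | append_singleton L x ih =>
    cases M with
    | nil => exact ⟨L ++ [x], [], [], by simp, rfl, by simpa using hL.reduce_eq⟩
    | cons y M =>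
      by_cases hxy : y = (x.1, !x.2)
      · subst hxy
        have hstep : reduce (L ++ [x] ++ (x.1, !x.2) :: M) = reduce (L ++ M) :=
          reduce.Step.eq (by rw [List.append_assoc, List.singleton_append]; exact Red.Step.not)
        obtain ⟨L₁, T, M₁, rfl, rfl, hred⟩ :=
          ih (hL.infix (List.prefix_append _ _).isInfix) (List.IsChain.tail hM)
        exact ⟨L₁, T ++ [x], M₁, by simp, by simp [invRev], hstep.trans hred⟩
      · have hxy' : x.1 = y.1 → x.2 = y.2 := by
          intro h
          by_contra h'
          exact hxy (Prod.ext h.symm (Bool.eq_not_of_ne (Ne.symm h')))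
        have hred : IsReduced (L ++ [x] ++ y :: M) :=
          hL.append_overlap (isReduced_cons_cons.2 ⟨hxy', hM⟩) (List.cons_ne_nil _ _)
        exact ⟨L ++ [x], [], y :: M, by simp, rfl, hred.reduce_eq⟩

theorem exists_toWord_mul_eq (x y : FreeGroup α) :
    ∃ L T M, x.toWord = L ++ T ∧ y.toWord = invRev T ++ M ∧ (x * y).toWord = L ++ M := by
  rw [toWord_mul]
  exact isReduced_toWord.exists_reduce_append_eq isReduced_toWord

theorem eq_nil_of_isReduced_invRev_append_self {L : List (α × Bool)}
    (h : IsReduced (invRev L ++ L)) : L = [] := by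
  have hcancel := reduce_invRev_left_cancel (L := L)
  rw [h.reduce_eq] at hcancel
  exact (List.append_eq_nil_iff.1 hcancel).2

theorem eq_one_of_norm_mul_eq_of_norm_mul_inv_eq {x d : FreeGroup α}
    (h₁ : (x * d).norm = x.norm) (h₂ : (x * d⁻¹).norm = x.norm) : d = 1 := by
  obtain ⟨L₁, T, M₁, hx₁, hd₁, hxd₁⟩ := exists_toWord_mul_eq x d
  obtain ⟨L₂, S, M₂, hx₂, hd₂, hxd₂⟩ := exists_toWord_mul_eq x d⁻¹
  have hd₂' : d.toWord = invRev M₂ ++ S := by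
    rw [← invRev_invRev (L₁ := d.toWord), ← toWord_inv, hd₂, invRev_append, invRev_invRev]
  have hM₁ : M₁.length = T.length := by
    simp only [norm, hxd₁, hx₁, List.length_append] at h₁
    omega
  have hM₂ : M₂.length = S.length := by
    simp only [norm, hxd₂, hx₂, List.length_append] at h₂
    omega
  have hlen : T.length = S.length := by
    have := congrArg List.length (hd₁.symm.trans hd₂')
    simp only [List.length_append, invRev_length] at this
    omega
  have hTS : T = S := List.append_inj_right' (hx₁.symm.trans hx₂) hlen
  have hM₁T : M₁ = T := by
    rw [hTS]
    exact List.append_inj_right' (hd₁.symm.trans hd₂') (by omega)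
  have hT : T = [] := by
    have hred : IsReduced (invRev T ++ M₁) := hd₁ ▸ isReduced_toWord
    rw [hM₁T] at hred
    exact eq_nil_of_isReduced_invRev_append_self hred
  rw [← toWord_eq_nil_iff, hd₁, hM₁T, hT]
  rfl

end FreeGroup

theorem stmt11_general (α : Type*) [DecidableEq α] (r : ℕ)
    (a b c : FreeGroup α) (ha : a.norm = r) (hb : b.norm = r) (hc : c.norm = r)
    (h : a⁻¹ * b = c⁻¹ * a) : a = b ∧ b = c := by
  have hb' : a * (a⁻¹ * b) = b := mul_inv_cancel_left a b
  have hc' : a * (a⁻¹ * b)⁻¹ = c := by rw [h]; group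
  have hd : a⁻¹ * b = 1 := FreeGroup.eq_one_of_norm_mul_eq_of_norm_mul_inv_eq
    (by rw [hb', hb, ha]) (by rw [hc', hc, ha])
  have hab : a = b := inv_mul_eq_one.1 hd
  have hca : c = a := inv_mul_eq_one.1 (h ▸ hd)
  exact ⟨hab, hab ▸ hca.symm⟩

theorem stmt11 (α : Type*) [DecidableEq α] (r : ℕ) (hr : 0 < r)
    (a b c : FreeGroup α) (ha : a.norm = r) (hb : b.norm = r) (hc : c.norm = r)
    (h : a⁻¹ * b = c⁻¹ * a) : a = b ∧ b = c :=
  stmt11_general α r a b c ha hb hc h
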